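/- arXiv:1809.03703 — 2 statements merged into one kernel-verified Lean document; each statement's English description precedes it below -/
import Mathlib

section
/- Let A, B, C be abelian groups, ι_B : B → A ⊕ B the standard inclusion, ψ : A ⊕ B → C surjective, and π_B : A ⊕ B → B a homomorphism with π_B ∘ ι_B an isomorphism. Suppose (ψ, π_B) : A ⊕ B → C ⊕ B is injective. Then the composition (q ⊕ id_B) ∘ (ψ, π_B) : A ⊕ B → (C / im(ψ ∘ ι_B)) ⊕ B is surjective, where q : C → C / im(ψ ∘ ι_B) is the quotient map. -/
/-- Let `A, B, C` be abelian groups, `ι_B : B → A ⊕ B` the standard inclusion,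
`ψ : A ⊕ B → C` surjective, `π_B : A ⊕ B → B` with `π_B ∘ ι_B` an isomorphism,
and suppose `(ψ, π_B) : A ⊕ B → C ⊕ B` is injective.  Then the composition
`(q ⊕ id_B) ∘ (ψ, π_B) : A ⊕ B → (C / im(ψ ∘ ι_B)) ⊕ B` is surjective, where
`q : C → C / im(ψ ∘ ι_B)` is the quotient map. -/
theorem stmt1 {A B C : Type*} [AddCommGroup A] [AddCommGroup B] [AddCommGroup C]
    (ψ : A × B →+ C) (π : A × B →+ B)
    (hψ : Function.Surjective ψ)
    (hπι : Function.Bijective (π.comp (AddMonoidHom.inr A B)))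
    (hinj : Function.Injective (ψ.prod π)) :
    Function.Surjective
      (((QuotientAddGroup.mk' (ψ.comp (AddMonoidHom.inr A B)).range).comp ψ).prod π) := by
  rintro ⟨x, b⟩
  obtain ⟨c, rfl⟩ := QuotientAddGroup.mk'_surjective _ x
  obtain ⟨p, hp⟩ := hψ c
  obtain ⟨t, ht⟩ := hπι.2 (b - π p)
  refine ⟨p + (0, t), Prod.ext ?_ ?_⟩
  · simp only [AddMonoidHom.prod_apply, AddMonoidHom.comp_apply, map_add,
      QuotientAddGroup.mk'_apply]
    rw [hp]
    refine (QuotientAddGroup.eq_iff_sub_mem.mpr ?_)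
    simpa using ⟨t, rfl⟩
  · show π (p + (0, t)) = b
    rw [map_add, show π (0, t) = b - π p from ht]; abel
end

section
/- Let A, B, C be abelian groups with B finite, ι_B : B → A ⊕ B the inclusion, ψ : A ⊕ B → C surjective, π_B : A ⊕ B → B with π_B ∘ ι_B an isomorphism, and (ψ, π_B) injective but not surjective. If im(ψ ∘ ι_B) has order 2, then A ⊕ B ≅ (C / im(ψ ∘ ι_B)) ⊕ B. -/
/-- Lemma 7.1(2): Let `A, B, C` be abelian groups with `B` finite,
`ι_B : B → A ⊕ B` the inclusion, `ψ : A ⊕ B → C` surjective, `π_B : A ⊕ B → B`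
with `π_B ∘ ι_B` an isomorphism, and `(ψ, π_B) : A ⊕ B → C ⊕ B` injective but
not surjective.  If `im(ψ ∘ ι_B)` has order `2`, then
`A ⊕ B ≅ (C / im(ψ ∘ ι_B)) ⊕ B`. -/
theorem stmt3 {A B C : Type*} [AddCommGroup A] [AddCommGroup B] [AddCommGroup C]
    [Finite B]
    (ψ : A × B →+ C) (π : A × B →+ B)
    (hψ : Function.Surjective ψ)
    (hπι : Function.Bijective (π.comp (AddMonoidHom.inr A B)))
    (hinj : Function.Injective (ψ.prod π))
    (hnsurj : ¬ Function.Surjective (ψ.prod π))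
    (hcard : Nat.card (ψ.comp (AddMonoidHom.inr A B)).range = 2) :
    Nonempty ((A × B) ≃+ (C ⧸ (ψ.comp (AddMonoidHom.inr A B)).range) × B) := by
  set H := (ψ.comp (AddMonoidHom.inr A B)).range with hHdef
  let e : B ≃+ B := AddEquiv.ofBijective _ hπι
  -- section s : B → A × B with π (s b) = b and ψ (s b) ∈ H
  set s : B → A × B := fun b => AddMonoidHom.inr A B (e.symm b) with hsdef
  have hπs : ∀ b, π (s b) = b := fun b => e.apply_symm_apply b
  have hψs : ∀ b, ψ (s b) ∈ H := fun b => ⟨e.symm b, rfl⟩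
  -- C = ψ(ker π) + H
  have hC : ∀ c : C, ∃ k h, π k = 0 ∧ h ∈ H ∧ c = ψ k + h := by
    intro c
    obtain ⟨x, hx⟩ := hψ c
    refine ⟨x - s (π x), ψ (s (π x)), ?_, hψs _, by rw [← map_add]; simp [hx]⟩
    simp [map_sub, hπs]
  -- key: ψ(ker π) ∩ H = 0
  have hKH : ∀ k : A × B, π k = 0 → ψ k ∈ H → ψ k = 0 := by
    intro k hk hkH
    by_contra hne
    -- then H = {0, ψ k}, so H ⊆ ψ(ker π) and (ψ, π) is surjective
    have hdich : ∀ g ∈ H, g = 0 ∨ g = ψ k := by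
      obtain ⟨b, hb, hbu⟩ := (Nat.card_eq_two_iff' (⟨0, zero_mem H⟩ : H)).mp hcard
      intro g hg
      by_cases hg0 : g = 0
      · exact Or.inl hg0
      · right
        have h1 : (⟨g, hg⟩ : H) = b := hbu _ (by simpa using hg0)
        have h2 : (⟨ψ k, hkH⟩ : H) = b := hbu _ (by simpa using hne)
        have := h1.trans h2.symm
        exact congrArg Subtype.val this
    -- H ⊆ ψ(ker π), hence ψ(ker π) = C
    have hfull : ∀ c : C, ∃ k' : A × B, π k' = 0 ∧ ψ k' = c := by
      intro c
      obtain ⟨k₁, h, hk₁, hh, hch⟩ := hC c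
      rcases hdich h hh with rfl | rfl
      · exact ⟨k₁, hk₁, by simp [hch]⟩
      · exact ⟨k₁ + k, by simp [map_add, hk₁, hk], by simp [hch, map_add]⟩
    apply hnsurj
    rintro ⟨c, b⟩
    obtain ⟨k', hk', hψk'⟩ := hfull (c - ψ (s b))
    refine ⟨k' + s b, ?_⟩
    simp [AddMonoidHom.prod_apply, map_add, hψk', hk', hπs]
  -- the isomorphism
  let θ : A × B →+ (C ⧸ H) × B :=
    ((QuotientAddGroup.mk' H).comp ψ).prod π
  have hθinj : Function.Injective θ := by
    rw [injective_iff_map_eq_zero]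
    intro x hx
    have h1 : ((ψ x : C) : C ⧸ H) = 0 := congrArg Prod.fst hx
    have h2 : π x = 0 := congrArg Prod.snd hx
    have h3 : ψ x ∈ H := (QuotientAddGroup.eq_zero_iff _).mp h1
    have h4 : ψ x = 0 := hKH x h2 h3
    have : (ψ.prod π) x = 0 := by simp [AddMonoidHom.prod_apply, h4, h2]
    exact hinj (by simpa using this)
  have hθsurj : Function.Surjective θ := by
    rintro ⟨q, b⟩
    obtain ⟨c, rfl⟩ := QuotientAddGroup.mk'_surjective H q
    obtain ⟨k, h, hk, hh, hch⟩ := hC (c - ψ (s b))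
    refine ⟨k + s b, ?_⟩
    have hψ' : ψ (k + s b) = c - h := by
      rw [map_add]
      have : ψ k = c - ψ (s b) - h := by rw [hch]; abel
      rw [this]; abel
    have hq : ((ψ (k + s b) : C) : C ⧸ H) = QuotientAddGroup.mk' H c := by
      rw [hψ']
      exact (QuotientAddGroup.mk'_eq_mk' H).mpr ⟨h, hh, by abel⟩
    have hπ' : π (k + s b) = b := by simp [map_add, hk, hπs]
    exact Prod.ext hq hπ'
  exact ⟨AddEquiv.ofBijective θ ⟨hθinj, hθsurj⟩⟩
end
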